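/- Let a ≥ b ≥ 2 with a > 2 and set d = gcd(a,b). Define r₀ = r_{s+1} = -1 and suppose integers r₁,…,r_s satisfy r_{i-1} - b_i r_i + r_{i+1} = 0 for all i ≠ j (for given integers b_i ≥ 2 for i ≠ j), and r_j = ab/d - (a/d + b/d) > 0. Then the sequence (r_i) is strictly increasing for 0 ≤ i ≤ j and strictly decreasing for j ≤ i ≤ s+1; in particular r_i > 0 for 1 ≤ i ≤ s except possibly r₁ or r_s may equal 0. -/
import Mathlib


/-- The convexity claim from the T_{a,b,∞} example: a sequence with
r₀ = r_{s+1} = -1 satisfying the recursion r_{i-1} - b_i r_i + r_{i+1} = 0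
with b_i ≥ 2 away from j, and with d·r_j = ab - a - b > 0, increases strictly
up to j and decreases strictly afterwards; in particular r_i > 0 for
2 ≤ i ≤ s-1 and r₁, r_s ≥ 0. -/
theorem Tab_monotone (a b d : ℤ) (hba : b ≤ a) (hb : 2 ≤ b) (ha : 2 < a)
    (hd : d = Int.gcd a b) (s j : ℕ) (hj1 : 1 ≤ j) (hjs : j ≤ s)
    (r bc : ℕ → ℤ) (hr0 : r 0 = -1) (hrs : r (s + 1) = -1)
    (hbc : ∀ i, 1 ≤ i → i ≤ s → i ≠ j → 2 ≤ bc i)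
    (hrec : ∀ i, 1 ≤ i → i ≤ s → i ≠ j → r (i - 1) - bc i * r i + r (i + 1) = 0)
    (hrj : d * r j = a * b - a - b) (hrjpos : 0 < r j) :
    (∀ i, i < j → r i < r (i + 1)) ∧
    (∀ i, j ≤ i → i ≤ s → r (i + 1) < r i) ∧
    (∀ i, 2 ≤ i → i + 1 ≤ s → 0 < r i) ∧
    0 ≤ r 1 ∧ 0 ≤ r s := by
  have hs1 : 1 ≤ s := hj1.trans hjs
  -- concavity where r i ≤ 0
  have step : ∀ i, 1 ≤ i → i ≤ s → i ≠ j → r i ≤ -1 →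
      r (i - 1) + r (i + 1) ≤ 2 * r i := by
    intro i h1 h2 h3 h4
    have h5 := hrec i h1 h2 h3
    have h6 := hbc i h1 h2 h3
    nlinarith [mul_nonneg (by linarith : (0:ℤ) ≤ bc i - 2) (by linarith : (0:ℤ) ≤ -r i)]
  -- convexity where r i ≥ 0
  have conv : ∀ i, 1 ≤ i → i ≤ s → i ≠ j → 0 ≤ r i →
      2 * r i ≤ r (i - 1) + r (i + 1) := by
    intro i h1 h2 h3 h4
    have h5 := hrec i h1 h2 h3
    have h6 := hbc i h1 h2 h3
    nlinarith [mul_nonneg (by linarith : (0:ℤ) ≤ bc i - 2) h4]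
  -- a strictly decreasing negative chain going left
  have chainL : ∀ i, i < j → r i ≤ -1 → r i + 1 ≤ r (i + 1) → r 0 + (i : ℤ) ≤ r i := by
    intro i
    induction i with
    | zero => intro _ _ _; simp
    | succ n ih =>
      intro hlt hneg hup
      have hst := step (n + 1) (by omega) (by omega) (by omega) hneg
      simp only [Nat.add_sub_cancel] at hst
      have hrn : r n + 1 ≤ r (n + 1) := by linarith
      have hnneg : r n ≤ -1 := by linarith
      have := ih (by omega) hnneg hrn
      push_cast
      linarith
  -- nonnegativity on [1, j]
  have NL : ∀ n i, j - i = n → 1 ≤ i → i ≤ j → 0 ≤ r i := by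
    intro n
    induction n with
    | zero =>
      intro i h h1 h2
      have : i = j := by omega
      subst this
      exact hrjpos.le
    | succ m ih =>
      intro i h h1 h2
      have hij : i < j := by omega
      have hnext : 0 ≤ r (i + 1) := ih (i + 1) (by omega) (by omega) (by omega)
      by_contra h'
      push_neg at h'
      have hneg : r i ≤ -1 := by omega
      have hup : r i + 1 ≤ r (i + 1) := by linarith
      have := chainL i hij hneg hup
      rw [hr0] at this
      omega
  -- a strictly decreasing negative chain going right
  have chainR : ∀ n i, i + n = s + 1 → j < i → r i ≤ -1 → r i + 1 ≤ r (i - 1) →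
      r (s + 1) + (n : ℤ) ≤ r i := by
    intro n
    induction n with
    | zero =>
      intro i h _ _ _
      have : i = s + 1 := by omega
      subst this
      simp
    | succ m ih =>
      intro i h hji hneg hup
      have hst := step i (by omega) (by omega) (by omega) hneg
      have hneg' : r (i + 1) ≤ -1 := by linarith
      have hup' : r (i + 1) + 1 ≤ r (i + 1 - 1) := by
        simp only [Nat.add_sub_cancel]
        linarith
      have := ih (i + 1) (by omega) (by omega) hneg' hup'
      push_cast
      linarith
  -- nonnegativity on [j, s]
  have NR : ∀ n i, i - j = n → j ≤ i → i ≤ s → 0 ≤ r i := by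
    intro n
    induction n with
    | zero =>
      intro i h h1 h2
      have : i = j := by omega
      subst this
      exact hrjpos.le
    | succ m ih =>
      intro i h h1 h2
      have hji : j < i := by omega
      have hprev : 0 ≤ r (i - 1) := ih (i - 1) (by omega) (by omega) (by omega)
      by_contra h'
      push_neg at h'
      have hneg : r i ≤ -1 := by omega
      have hup : r i + 1 ≤ r (i - 1) := by linarith
      have := chainR (s + 1 - i) i (by omega) hji hneg hup
      rw [hrs] at this
      omega
  have nonneg : ∀ i, 1 ≤ i → i ≤ s → 0 ≤ r i := by
    intro i h1 h2
    rcases lt_trichotomy i j with h | h | h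
    · exact NL (j - i) i rfl h1 h.le
    · subst h; exact hrjpos.le
    · exact NR (i - j) i rfl h.le h2
  -- strictly increasing up to j
  have Inc : ∀ i, i < j → r i + 1 ≤ r (i + 1) := by
    intro i
    induction i with
    | zero =>
      intro _
      have := nonneg 1 le_rfl hs1
      rw [hr0]
      linarith
    | succ n ih =>
      intro h
      have ihn := ih (by omega)
      have hc := conv (n + 1) (by omega) (by omega) (by omega)
        (nonneg (n + 1) (by omega) (by omega))
      simp only [Nat.add_sub_cancel] at hc
      linarith
  -- strictly decreasing after j
  have Dec : ∀ n i, i + n = s → j ≤ i → r (i + 1) + 1 ≤ r i := by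
    intro n
    induction n with
    | zero =>
      intro i h hj
      have hi : i = s := by omega
      rw [hi, hrs]
      have := nonneg s hs1 le_rfl
      linarith
    | succ m ih =>
      intro i h hj
      have ihn := ih (i + 1) (by omega) (by omega)
      have hc := conv (i + 1) (by omega) (by omega) (by omega)
        (nonneg (i + 1) (by omega) (by omega))
      simp only [Nat.add_sub_cancel] at hc
      linarith
  refine ⟨?_, ?_, ?_, nonneg 1 le_rfl hs1, nonneg s hs1 le_rfl⟩
  · intro i hi
    have := Inc i hi
    linarith
  · intro i h1 h2
    have := Dec (s - i) i (by omega) h1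
    linarith
  · intro i h1 h2
    rcases le_or_gt i j with h | h
    · obtain ⟨k, rfl⟩ : ∃ k, i = k + 2 := ⟨i - 2, by omega⟩
      have h3 := Inc (k + 1) (by omega)
      have := nonneg (k + 1) (by omega) (by omega)
      linarith
    · have h3 := Dec (s - i) i (by omega) h.le
      have := nonneg (i + 1) (by omega) h2
      linarith
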